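/- arXiv:2303.04493 — 2 statements merged into one kernel-verified Lean document; each statement's English description precedes it below -/
import Mathlib

section
/- For any finite group G with normalized 3-cocycle ω valued in k^× and any subgroup H ≤ G, the induction functor I : Z(Vect_H^ω) → Z(Vect_G^ω), equipped with the lax structure μ_{V,W}((g⊗v_d)⊗(g⊗w_f)) = γ(g)(d,f)⁻¹ g⊗(v_d⊗w_f) (zero on (g⊗v)⊗(k⊗w) when g⁻¹k ∉ H), unit 1 ↦ Σ_i g_i⊗1 over coset representatives, oplax structure ν_{V,W}(g⊗(v_d⊗w_f)) = γ(g)(d,f)·(g⊗v_d)⊗(g⊗w_f) and counit g⊗1 ↦ 1, is a separable Frobenius monoidal functor: the two Frobenius compatibility conditions hold, and μ_{V,W}∘ν_{V,W} = id_{I(V⊗W)} for all V, W. -/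
/-!
`I(V) ⊗ I(W)` is spanned by the elements `(g⊗v) ⊗ (g'⊗w)` with `v, w` homogeneous. When
`g⁻¹g' ∉ H` both sides of each Frobenius identity vanish, because `μ` does; otherwise
`g'⊗w` can be rewritten over the representative `g`. On elements over a single `g` every map
involved only multiplies by values of `γ(g)` and `ω`, and both Frobenius identities become
`γ(g)(d,e) γ(g)(de,f) ω(d,e,f) = γ(g)(d,ef) γ(g)(e,f) ω(gdg⁻¹,geg⁻¹,gfg⁻¹)`,
the product of four instances of the cocycle condition. Separability holds because the
`γ(g)`-factors of `μ` and `ν` are inverse to each other.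
-/

open scoped TensorProduct

namespace DW

/-! ### Cocycle combinatorics -/

section Cocycle

variable {G : Type*} [Group G] {M : Type*} [CommGroup M]

/-- The 3-cocycle condition for a function `ω : G³ → M`. -/
def IsCocycle (ω : G → G → G → M) : Prop :=
  ∀ a b c d : G, ω (a * b) c d * ω a b (c * d) = ω a b c * ω a (b * c) d * ω b c d

/-- `ω` is normalized if it takes the value `1` whenever an argument is `1`. -/
def IsNormalized (ω : G → G → G → M) : Prop :=
  ∀ a b c : G, a = 1 ∨ b = 1 ∨ c = 1 → ω a b c = 1

/-- `τ(h,k)(d) = ω(h,k,d)·ω(hkd(hk)⁻¹,h,k)/ω(h,kdk⁻¹,k)`. -/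
def tauc (ω : G → G → G → M) (h k d : G) : M :=
  ω h k d * ω (h * k * d * (h * k)⁻¹) h k * (ω h (k * d * k⁻¹) k)⁻¹

/-- `γ(h)(d,f) = ω(h,d,f)·ω(hdh⁻¹,hfh⁻¹,h)/ω(hdh⁻¹,h,f)`. -/
def gamc (ω : G → G → G → M) (h d f : G) : M :=
  ω h d f * ω (h * d * h⁻¹) (h * f * h⁻¹) h * (ω (h * d * h⁻¹) h f)⁻¹

end Cocycle

/-! ### Twisted Yetter–Drinfeld modules -/

/-- A twisted Yetter–Drinfeld module structure over `(G, ω)` on a `k`-vector space `M`: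
a `G`-grading (given internally by submodules) together with a twisted `G`-action. -/
structure YDOn (k : Type*) [Field k] {G : Type*} [Group G] [DecidableEq G]
    (ω : G → G → G → kˣ) (M : Type*) [AddCommGroup M] [Module k M] where
  grading : G → Submodule k M
  internal : DirectSum.IsInternal grading
  act : G → M →ₗ[k] M
  act_one : act 1 = LinearMap.id
  act_mem : ∀ (g d : G), ∀ v ∈ grading d, act g v ∈ grading (g * d * g⁻¹)
  act_act : ∀ (h g d : G), ∀ v ∈ grading d,
    act h (act g v) = ((tauc ω h g d : kˣ) : k) • act (h * g) v

section YD

variable {k : Type*} [Field k] {G : Type*} [Group G] [DecidableEq G] {ω : G → G → G → kˣ}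

/-- Morphisms of twisted Yetter–Drinfeld modules: grading-preserving and `G`-equivariant. -/
def IsYDHom {M N : Type*} [AddCommGroup M] [Module k M] [AddCommGroup N] [Module k N]
    (S : YDOn k ω M) (T : YDOn k ω N) (f : M →ₗ[k] N) : Prop :=
  (∀ d : G, ∀ v ∈ S.grading d, f v ∈ T.grading d) ∧
  ∀ g : G, f ∘ₗ S.act g = T.act g ∘ₗ f

/-- `θ` is the ribbon twist map, i.e. `θ(v_d) = d·v_d` on homogeneous elements. -/
def IsTwistMap {M : Type*} [AddCommGroup M] [Module k M] (S : YDOn k ω M)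
    (θ : M →ₗ[k] M) : Prop :=
  ∀ d : G, ∀ v ∈ S.grading d, θ v = S.act d v

/-- `T` is the tensor-product Yetter–Drinfeld structure on `V ⊗ W`:
grading `(V⊗W)_d = ⊕_{ab=d} V_a ⊗ W_b`, action `h·(v_a⊗w_b) = γ(h)(a,b) (h·v ⊗ h·w)`. -/
def IsTensorStruct {V W : Type*} [AddCommGroup V] [Module k V] [AddCommGroup W] [Module k W]
    (SV : YDOn k ω V) (SW : YDOn k ω W) (T : YDOn k ω (V ⊗[k] W)) : Prop :=
  (∀ d : G, T.grading d =
      ⨆ a : G, Submodule.map₂ (TensorProduct.mk k V W) (SV.grading a) (SW.grading (a⁻¹ * d))) ∧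
  ∀ (h a b : G) (v : V) (w : W), v ∈ SV.grading a → w ∈ SW.grading b →
    T.act h (v ⊗ₜ[k] w) = ((gamc ω h a b : kˣ) : k) • (SV.act h v ⊗ₜ[k] SW.act h w)

/-- `c` is the braiding `c_{V,W}(v_g ⊗ w) = (g·w) ⊗ v_g`. -/
def IsBraidingMap {V W : Type*} [AddCommGroup V] [Module k V] [AddCommGroup W] [Module k W]
    (SV : YDOn k ω V) (SW : YDOn k ω W) (c : V ⊗[k] W →ₗ[k] W ⊗[k] V) : Prop :=
  ∀ (g : G) (v : V) (w : W), v ∈ SV.grading g → c (v ⊗ₜ[k] w) = SW.act g w ⊗ₜ[k] v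

/-- `a` is the associator `α((u_g⊗v_h)⊗w_l) = ω(g,h,l)⁻¹ u⊗(v⊗w)`. -/
def IsAssocMap {U V W : Type*} [AddCommGroup U] [Module k U] [AddCommGroup V] [Module k V]
    [AddCommGroup W] [Module k W]
    (SU : YDOn k ω U) (SV : YDOn k ω V) (SW : YDOn k ω W)
    (a : (U ⊗[k] V) ⊗[k] W →ₗ[k] U ⊗[k] (V ⊗[k] W)) : Prop :=
  ∀ (g h l : G) (u : U) (v : V) (w : W),
    u ∈ SU.grading g → v ∈ SV.grading h → w ∈ SW.grading l →
    a ((u ⊗ₜ[k] v) ⊗ₜ[k] w) = (((ω g h l)⁻¹ : kˣ) : k) • (u ⊗ₜ[k] (v ⊗ₜ[k] w))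

/-- `a` is the inverse associator `α⁻¹(u_g⊗(v_h⊗w_l)) = ω(g,h,l) (u⊗v)⊗w`. -/
def IsAssocInvMap {U V W : Type*} [AddCommGroup U] [Module k U] [AddCommGroup V] [Module k V]
    [AddCommGroup W] [Module k W]
    (SU : YDOn k ω U) (SV : YDOn k ω V) (SW : YDOn k ω W)
    (a : U ⊗[k] (V ⊗[k] W) →ₗ[k] (U ⊗[k] V) ⊗[k] W) : Prop :=
  ∀ (g h l : G) (u : U) (v : V) (w : W),
    u ∈ SU.grading g → v ∈ SV.grading h → w ∈ SW.grading l →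
    a (u ⊗ₜ[k] (v ⊗ₜ[k] w)) = ((ω g h l : kˣ) : k) • ((u ⊗ₜ[k] v) ⊗ₜ[k] w)

/-- The unit object: `k` concentrated in degree `1` with trivial action. -/
def IsUnitStruct (S : YDOn k ω k) : Prop :=
  S.grading 1 = ⊤ ∧ (∀ d : G, d ≠ 1 → S.grading d = ⊥) ∧ ∀ g : G, S.act g = LinearMap.id

end YD

/-! ### The induction functor -/

section Induced

variable {k : Type*} [Field k] {G : Type*} [Group G] [DecidableEq G]
variable (ω : G → G → G → kˣ) (H : Subgroup G)

/-- Restriction of a 3-cocycle on `G` to a subgroup `H`. -/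
def resCocycle : ↥H → ↥H → ↥H → kˣ := fun a b c => ω ↑a ↑b ↑c

variable {V : Type*} [AddCommGroup V] [Module k V]

/-- The relations `g h ⊗ v_d = τ(g,h)(d)⁻¹ g ⊗ (h·v_d)` defining `I(V) = kG ⊗_{kH} V`. -/
noncomputable def indRel (S : YDOn k (resCocycle ω H) V) : Submodule k (G →₀ V) :=
  Submodule.span k
    {x | ∃ (g : G) (h d : ↥H) (v : V), v ∈ S.grading d ∧
      x = Finsupp.single (g * ↑h) v
        - (((tauc ω g ↑h ↑d)⁻¹ : kˣ) : k) • Finsupp.single g (S.act h v)}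

/-- The carrier of the induced module `I(V)`. -/
abbrev IndCarrier (S : YDOn k (resCocycle ω H) V) : Type _ :=
  (G →₀ V) ⧸ indRel ω H S

/-- The generator `g ⊗ v` of `I(V)`. -/
noncomputable def jgen (S : YDOn k (resCocycle ω H) V) (g : G) (v : V) : IndCarrier ω H S :=
  Submodule.Quotient.mk (Finsupp.single g v)

/-- `T` is the twisted Yetter–Drinfeld structure of the induced module `I(V)`:
`deg (g⊗v_e) = g e g⁻¹` and `c ⊳ (g⊗v_e) = τ(c,g)(e) (cg ⊗ v_e)`. -/
def IsIndStruct (S : YDOn k (resCocycle ω H) V) (T : YDOn k ω (IndCarrier ω H S)) : Prop :=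
  (∀ d : G, T.grading d = Submodule.span k
      {x | ∃ (g : G) (e : ↥H) (v : V), v ∈ S.grading e ∧ g * ↑e * g⁻¹ = d ∧
        x = jgen ω H S g v}) ∧
  ∀ (c g : G) (e : ↥H) (v : V), v ∈ S.grading e →
    T.act c (jgen ω H S g v) = ((tauc ω c g ↑e : kˣ) : k) • jgen ω H S (c * g) v

/-- `F` is the induced morphism `I(f)` of a morphism `f`. -/
def IsIndMap {W : Type*} [AddCommGroup W] [Module k W]
    (S : YDOn k (resCocycle ω H) V) (S' : YDOn k (resCocycle ω H) W)
    (f : V →ₗ[k] W) (F : IndCarrier ω H S →ₗ[k] IndCarrier ω H S') : Prop :=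
  ∀ (g : G) (v : V), F (jgen ω H S g v) = jgen ω H S' g (f v)

/-- `ν` is the oplax structure map
`ν(g ⊗ (a_d ⊗ b_f)) = γ(g)(d,f) (g⊗a) ⊗ (g⊗b)`. -/
def IsNuMap {A B : Type*} [AddCommGroup A] [Module k A] [AddCommGroup B] [Module k B]
    (SA : YDOn k (resCocycle ω H) A) (SB : YDOn k (resCocycle ω H) B)
    (SAB : YDOn k (resCocycle ω H) (A ⊗[k] B))
    (ν : IndCarrier ω H SAB →ₗ[k] IndCarrier ω H SA ⊗[k] IndCarrier ω H SB) : Prop :=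
  ∀ (g : G) (d f : ↥H) (a : A) (b : B), a ∈ SA.grading d → b ∈ SB.grading f →
    ν (jgen ω H SAB g (a ⊗ₜ[k] b)) =
      ((gamc ω g ↑d ↑f : kˣ) : k) • (jgen ω H SA g a ⊗ₜ[k] jgen ω H SB g b)

/-- `μ` is the lax structure map: zero across distinct cosets and
`μ((g⊗a_d) ⊗ (g⊗b_f)) = γ(g)(d,f)⁻¹ (g ⊗ (a⊗b))`. -/
def IsMuMap {A B : Type*} [AddCommGroup A] [Module k A] [AddCommGroup B] [Module k B]
    (SA : YDOn k (resCocycle ω H) A) (SB : YDOn k (resCocycle ω H) B)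
    (SAB : YDOn k (resCocycle ω H) (A ⊗[k] B))
    (μ : IndCarrier ω H SA ⊗[k] IndCarrier ω H SB →ₗ[k] IndCarrier ω H SAB) : Prop :=
  (∀ g g' : G, g⁻¹ * g' ∉ H → ∀ (a : A) (b : B),
      μ (jgen ω H SA g a ⊗ₜ[k] jgen ω H SB g' b) = 0) ∧
  ∀ (g : G) (d f : ↥H) (a : A) (b : B), a ∈ SA.grading d → b ∈ SB.grading f →
    μ (jgen ω H SA g a ⊗ₜ[k] jgen ω H SB g b) =
      (((gamc ω g ↑d ↑f)⁻¹ : kˣ) : k) • jgen ω H SAB g (a ⊗ₜ[k] b)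

/-- The counit `I(1) → 1`, `g ⊗ c ↦ c`. -/
def IsCounitMap (S1 : YDOn k (resCocycle ω H) k)
    (ε : IndCarrier ω H S1 →ₗ[k] k) : Prop :=
  ∀ (g : G) (c : k), ε (jgen ω H S1 g c) = c

/-- The unit `1 → I(1)`, `1 ↦ ∑ᵢ gᵢ ⊗ 1` over a set `R` of left coset representatives. -/
def IsUnitMap (S1 : YDOn k (resCocycle ω H) k) (R : Finset G)
    (η : k →ₗ[k] IndCarrier ω H S1) : Prop :=
  (∀ g : G, ∃! r, r ∈ R ∧ g⁻¹ * r ∈ H) ∧ η 1 = ∑ r ∈ R, jgen ω H S1 r (1 : k)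

end Induced

/-! ### The coset algebra and classification data -/

section AH

variable (k : Type*) [Field k] {G : Type*} [Group G]

/-- The twisted action of `G` on functions on `G/H` : `(c·f)(x) = f(c⁻¹x)`. -/
def cosetAct (H : Subgroup G) (c : G) : ((G ⧸ H) → k) →ₗ[k] ((G ⧸ H) → k) :=
  LinearMap.funLeft k k fun x => c⁻¹ • x

/-- Basis element `e_n` of the twisted group algebra `B(N,κ,ε)`. -/
noncomputable def bGen {H : Type*} [Group H] (N : Subgroup H) (n : ↥N) : ↥N →₀ k :=
  Finsupp.single n 1

end AH

section ClassData

variable {H : Type*} [Group H] {M : Type*} [CommGroup M]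

/-- The conditions on the classification data `(N, κ, ε)` from Davydov–Simmons. -/
def ClassData (ω : H → H → H → M) (N : Subgroup H) (κ ε : H → H → M) : Prop :=
  (∀ n ∈ N, κ n 1 = 1 ∧ κ 1 n = 1) ∧
  (∀ n ∈ N, ∀ m ∈ N, ∀ l ∈ N,
      ω n m l = κ n m * (κ m l)⁻¹ * κ (n * m) l * (κ n (m * l))⁻¹) ∧
  (∀ h g : H, ∀ n ∈ N, tauc ω h g n = ε h (g * n * g⁻¹) * ε g n * (ε (h * g) n)⁻¹) ∧
  (∀ h : H, ∀ n ∈ N, ∀ m ∈ N,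
      gamc ω h n m
        = ε h (n * m) * (ε h n)⁻¹ * (ε h m)⁻¹ * κ (h * n * h⁻¹) (h * m * h⁻¹) * (κ n m)⁻¹) ∧
  ∀ n ∈ N, ∀ m ∈ N, κ (n * m * n⁻¹) n = ε n m * κ n m

end ClassData

section BStruct

variable {k : Type*} [Field k] {H : Type*} [Group H] [DecidableEq H]

/-- The twisted Yetter–Drinfeld structure of `B(N,κ,ε)`:
`e_n` has degree `n` and `h·e_n = ε_h(n) e_{hnh⁻¹}`. -/
def IsBStruct (ω : H → H → H → kˣ) (N : Subgroup H) (hN : N.Normal) (ε : H → H → kˣ)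
    (S : YDOn k ω (↥N →₀ k)) : Prop :=
  (∀ d : H, S.grading d = Submodule.span k {x | ∃ n : ↥N, ↑n = d ∧ x = bGen k N n}) ∧
  ∀ (h : H) (n : ↥N), S.act h (bGen k N n) =
    ((ε h ↑n : kˣ) : k) • bGen k N ⟨h * ↑n * h⁻¹, hN.conj_mem ↑n n.2 h⟩

/-- The multiplication of `B(N,κ,ε)`: `e_n e_m = κ(n,m)⁻¹ e_{nm}`. -/
def IsBMul (N : Subgroup H) (κ : H → H → kˣ)
    (mulB : (↥N →₀ k) ⊗[k] (↥N →₀ k) →ₗ[k] (↥N →₀ k)) : Prop :=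
  ∀ n m : ↥N, mulB (bGen k N n ⊗ₜ[k] bGen k N m) =
    (((κ ↑n ↑m)⁻¹ : kˣ) : k) • bGen k N (n * m)

end BStruct

/-! ### Algebras, étale algebras and Frobenius algebras in the category -/

section Algebras

variable {k : Type*} [Field k] {G : Type*} [Group G] [DecidableEq G] {ω : G → G → G → kˣ}
variable {M : Type*} [AddCommGroup M] [Module k M]

/-- `(M, mulM, uM)` is a connected étale (= connected commutative separable) algebra in
`Z(Vect_G^ω)`. -/
def IsConnectedEtale (T : YDOn k ω M) (mulM : M ⊗[k] M →ₗ[k] M) (uM : k →ₗ[k] M) : Prop :=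
  -- the multiplication is a morphism in the category
  (∃ Tt : YDOn k ω (M ⊗[k] M), IsTensorStruct T T Tt ∧ IsYDHom Tt T mulM) ∧
  -- the unit is a morphism in the category
  (uM 1 ∈ T.grading 1) ∧ (∀ g : G, T.act g (uM 1) = uM 1) ∧
  -- unitality
  (∀ x : M, mulM (uM 1 ⊗ₜ[k] x) = x ∧ mulM (x ⊗ₜ[k] uM 1) = x) ∧
  -- associativity (with respect to the associator of the category)
  (∃ a, IsAssocMap T T T a ∧
      mulM ∘ₗ TensorProduct.map mulM LinearMap.id
        = mulM ∘ₗ TensorProduct.map LinearMap.id mulM ∘ₗ a) ∧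
  -- commutativity
  (∃ c, IsBraidingMap T T c ∧ mulM ∘ₗ c = mulM) ∧
  -- separability
  (∃ (Δ' : M →ₗ[k] M ⊗[k] M) (Tt : YDOn k ω (M ⊗[k] M))
      (a : (M ⊗[k] M) ⊗[k] M →ₗ[k] M ⊗[k] (M ⊗[k] M))
      (a' : M ⊗[k] (M ⊗[k] M) →ₗ[k] (M ⊗[k] M) ⊗[k] M),
      IsTensorStruct T T Tt ∧ IsAssocMap T T T a ∧ IsAssocInvMap T T T a' ∧
      IsYDHom T Tt Δ' ∧ mulM ∘ₗ Δ' = LinearMap.id ∧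
      TensorProduct.map LinearMap.id mulM ∘ₗ a ∘ₗ TensorProduct.map Δ' LinearMap.id
        = Δ' ∘ₗ mulM ∧
      Δ' ∘ₗ mulM
        = TensorProduct.map mulM LinearMap.id ∘ₗ a' ∘ₗ TensorProduct.map LinearMap.id Δ') ∧
  -- connectedness : Hom(1, M) is one-dimensional
  Module.finrank k
    ↥(T.grading 1 ⊓ ⨅ g : G, LinearMap.eqLocus (T.act g) (LinearMap.id : M →ₗ[k] M)) = 1

/-- `(M, mulM, uM)` is a rigid Frobenius (= connected commutative special Frobenius)
algebra in `Z(Vect_G^ω)`. -/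
def IsRigidFrobenius (T : YDOn k ω M) (mulM : M ⊗[k] M →ₗ[k] M) (uM : k →ₗ[k] M) : Prop :=
  IsConnectedEtale T mulM uM ∧
  ∃ (Δ : M →ₗ[k] M ⊗[k] M) (εM : M →ₗ[k] k),
    -- Δ and ε are morphisms in the category
    (∃ Tt : YDOn k ω (M ⊗[k] M), IsTensorStruct T T Tt ∧ IsYDHom T Tt Δ) ∧
    (∀ g : G, εM ∘ₗ T.act g = εM) ∧ (∀ d : G, d ≠ 1 → ∀ v ∈ T.grading d, εM v = 0) ∧
    -- coassociativity and counitality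
    (∀ a, IsAssocMap T T T a →
        a ∘ₗ TensorProduct.map Δ LinearMap.id ∘ₗ Δ = TensorProduct.map LinearMap.id Δ ∘ₗ Δ) ∧
    (TensorProduct.lid k M).toLinearMap ∘ₗ TensorProduct.map εM LinearMap.id ∘ₗ Δ
      = LinearMap.id ∧
    (TensorProduct.rid k M).toLinearMap ∘ₗ TensorProduct.map LinearMap.id εM ∘ₗ Δ
      = LinearMap.id ∧
    -- the Frobenius compatibility
    (∀ a a', IsAssocMap T T T a → IsAssocInvMap T T T a' →
        TensorProduct.map mulM LinearMap.id ∘ₗ a' ∘ₗ TensorProduct.map LinearMap.id Δ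
          = Δ ∘ₗ mulM ∧
        Δ ∘ₗ mulM = TensorProduct.map LinearMap.id mulM ∘ₗ a ∘ₗ TensorProduct.map Δ LinearMap.id) ∧
    -- specialness
    (∃ β : k, β ≠ 0 ∧ mulM ∘ₗ Δ = β • LinearMap.id) ∧
    ∃ β1 : k, β1 ≠ 0 ∧ εM (uM 1) = β1

/-- `(V, ρ)` is a local right module over the commutative algebra `(A, mulA, u)`. -/
def IsLocModule {A V : Type*} [AddCommGroup A] [Module k A] [AddCommGroup V] [Module k V]
    (SA : YDOn k ω A) (mulA : A ⊗[k] A →ₗ[k] A) (u : A)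
    (SV : YDOn k ω V) (ρ : V →ₗ[k] A →ₗ[k] V) : Prop :=
  (∀ d e : G, ∀ v ∈ SV.grading d, ∀ a ∈ SA.grading e, ρ v a ∈ SV.grading (d * e)) ∧
  (∀ v : V, ρ v u = v) ∧
  (∀ (d e f : G) (v : V) (a b : A), v ∈ SV.grading d → a ∈ SA.grading e → b ∈ SA.grading f →
      ρ (ρ v a) b = (((ω d e f)⁻¹ : kˣ) : k) • ρ v (mulA (a ⊗ₜ[k] b))) ∧
  (∀ (h d e : G) (v : V) (a : A), v ∈ SV.grading d → a ∈ SA.grading e →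
      SV.act h (ρ v a) = ((gamc ω h d e : kˣ) : k) • ρ (SV.act h v) (SA.act h a)) ∧
  ∀ (d e : G) (v : V) (a : A), v ∈ SV.grading d → a ∈ SA.grading e →
    ρ v a = ρ (SV.act (d * e * d⁻¹) v) (SA.act d a)

/-- The submodule of `X ⊗ Y` which is divided out to form the relative tensor product
`X ⊗_A Y` over a commutative algebra `A` (the left action on `Y` is obtained from the
right action through the braiding). -/
def relLoc {A X Y : Type*} [AddCommGroup A] [Module k A] [AddCommGroup X] [Module k X]
    [AddCommGroup Y] [Module k Y]
    (SA : YDOn k ω A) (SY : YDOn k ω Y)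
    (ρX : X →ₗ[k] A →ₗ[k] X) (ρY : Y →ₗ[k] A →ₗ[k] Y) : Submodule k (X ⊗[k] Y) :=
  Submodule.span k
    {t | ∃ (e : G) (a : A) (x : X) (y : Y), a ∈ SA.grading e ∧
      t = ρX x a ⊗ₜ[k] y - x ⊗ₜ[k] ρY (SY.act e y) a}

end Algebras

end DW

open DW

theorem Finsupp.span_iUnion_single_image_eq_top {α M R : Type*} [Semiring R] [AddCommMonoid M]
    [Module R M] {s : Set M} (hs : Submodule.span R s = ⊤) :
    Submodule.span R (⋃ a : α, Finsupp.single a '' s) = ⊤ := by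
  simp only [Submodule.span_iUnion, Finsupp.span_single_image, hs, Submodule.map_top,
    Finsupp.iSup_lsingle_range]

theorem TensorProduct.span_image2_tmul_eq_top {R M N : Type*} [CommSemiring R]
    [AddCommMonoid M] [AddCommMonoid N] [Module R M] [Module R N] {s : Set M} {t : Set N}
    (hs : Submodule.span R s = ⊤) (ht : Submodule.span R t = ⊤) :
    Submodule.span R (Set.image2 (· ⊗ₜ[R] ·) s t) = ⊤ := by
  have := Submodule.map₂_span_span R (TensorProduct.mk R M N) s t
  rwa [hs, ht, TensorProduct.map₂_mk_top_top_eq_top, eq_comm] at this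

namespace DW

theorem gamc_mul_gamc_mul {G : Type*} [Group G] {M : Type*} [CommGroup M]
    {ω : G → G → G → M} (hω : IsCocycle ω) (g d e f : G) :
    gamc ω g d e * gamc ω g (d * e) f * ω d e f
      = gamc ω g d (e * f) * gamc ω g e f * ω (g * d * g⁻¹) (g * e * g⁻¹) (g * f * g⁻¹) := by
  have c1 := hω g d e f
  have c2 := hω (g * d * g⁻¹) g e f
  have c3 := hω (g * d * g⁻¹) (g * e * g⁻¹) g f
  have c4 := hω (g * d * g⁻¹) (g * e * g⁻¹) (g * f * g⁻¹) g
  have conj_mul : ∀ a b : G, g * a * g⁻¹ * (g * b * g⁻¹) = g * (a * b) * g⁻¹ := by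
    intro a b; group
  have conj_mul_self : ∀ a : G, g * a * g⁻¹ * g = g * a := by intro a; group
  simp only [conj_mul, conj_mul_self] at c2 c3 c4
  apply_fun Additive.ofMul at c1 c2 c3 c4 ⊢
  simp only [gamc, ofMul_mul, ofMul_inv] at c1 c2 c3 c4 ⊢
  linear_combination (norm := abel) c4 - c3 + c2 - c1

section Grading

variable {k : Type*} [Field k] {G : Type*} [Group G] [DecidableEq G] {ω : G → G → G → kˣ}
variable {V W : Type*} [AddCommGroup V] [Module k V] [AddCommGroup W] [Module k W]

theorem YDOn.span_homogeneous (S : YDOn k ω V) :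
    Submodule.span k (⋃ d, (S.grading d : Set V)) = ⊤ :=
  (Submodule.iSup_eq_span _).symm.trans S.internal.submodule_iSup_eq_top

theorem IsTensorStruct.tmul_mem {SV : YDOn k ω V} {SW : YDOn k ω W} {SVW : YDOn k ω (V ⊗[k] W)}
    (hT : IsTensorStruct SV SW SVW) {d e : G} {v : V} {w : W}
    (hv : v ∈ SV.grading d) (hw : w ∈ SW.grading e) :
    v ⊗ₜ[k] w ∈ SVW.grading (d * e) := by
  rw [hT.1]
  refine Submodule.mem_iSup_of_mem d (Submodule.apply_mem_map₂ _ hv ?_)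
  rwa [inv_mul_cancel_left]

theorem span_homogeneous_tmul (SV : YDOn k ω V) (SW : YDOn k ω W) :
    Submodule.span k (Set.image2 (· ⊗ₜ[k] ·) (⋃ d, (SV.grading d : Set V))
      (⋃ e, (SW.grading e : Set W))) = ⊤ :=
  TensorProduct.span_image2_tmul_eq_top SV.span_homogeneous SW.span_homogeneous

end Grading

section Induced

variable {k : Type*} [Field k] {G : Type*} [Group G] [DecidableEq G]
variable (ω : G → G → G → kˣ) (H : Subgroup G)
variable {V : Type*} [AddCommGroup V] [Module k V]

noncomputable def jgenₗ (S : YDOn k (resCocycle ω H) V) (g : G) : V →ₗ[k] IndCarrier ω H S :=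
  (indRel ω H S).mkQ ∘ₗ Finsupp.lsingle g

theorem jgen_smul (S : YDOn k (resCocycle ω H) V) (g : G) (c : k) (v : V) :
    jgen ω H S g (c • v) = c • jgen ω H S g v :=
  (jgenₗ ω H S g).map_smul c v

theorem span_jgen (S : YDOn k (resCocycle ω H) V) {s : Set V} (hs : Submodule.span k s = ⊤) :
    Submodule.span k (⋃ g, jgen ω H S g '' s) = ⊤ := by
  have : (⋃ g, jgen ω H S g '' s) = (indRel ω H S).mkQ '' ⋃ g, Finsupp.single g '' s := by
    simp only [Set.image_iUnion, Set.image_image]; rfl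
  rw [this, Submodule.span_image, Finsupp.span_iUnion_single_image_eq_top hs, Submodule.map_top,
    Submodule.range_mkQ]

theorem jgen_mul (S : YDOn k (resCocycle ω H) V) (g : G) {h d : H} {v : V}
    (hv : v ∈ S.grading d) :
    jgen ω H S (g * h) v = (((tauc ω g h d)⁻¹ : kˣ) : k) • jgen ω H S g (S.act h v) := by
  unfold jgen
  rw [← Submodule.Quotient.mk_smul, Submodule.Quotient.eq]
  exact Submodule.subset_span ⟨g, h, d, v, hv, rfl⟩

variable {ω H} {A B P : Type*} [AddCommGroup A] [Module k A] [AddCommGroup B] [Module k B]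
  [AddCommGroup P] [Module k P]

theorem IsIndStruct.jgen_mem {S : YDOn k (resCocycle ω H) V} {T : YDOn k ω (IndCarrier ω H S)}
    (hT : IsIndStruct ω H S T) {e : H} {v : V} (hv : v ∈ S.grading e) (g : G) :
    jgen ω H S g v ∈ T.grading (g * e * g⁻¹) := by
  rw [hT.1]
  exact Submodule.subset_span ⟨g, e, v, hv, rfl, rfl⟩

/-- Generators in a common coset are moved to equal representatives by
`g h ⊗ b = τ(g,h)(e)⁻¹ g ⊗ (h·b)`, which needs `b` homogeneous. -/
theorem ind_tmul_ext {SA : YDOn k (resCocycle ω H) A} {SB : YDOn k (resCocycle ω H) B}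
    {φ ψ : IndCarrier ω H SA ⊗[k] IndCarrier ω H SB →ₗ[k] P} {s : Set A} {t : Set B}
    (hs : Submodule.span k s = ⊤) (ht : Submodule.span k t = ⊤)
    (ht_hom : ∀ b ∈ t, ∃ e, b ∈ SB.grading e)
    (h_same : ∀ g : G, ∀ a ∈ s, ∀ b ∈ t,
      φ (jgen ω H SA g a ⊗ₜ jgen ω H SB g b) = ψ (jgen ω H SA g a ⊗ₜ jgen ω H SB g b))
    (h_cross : ∀ g g' : G, g⁻¹ * g' ∉ H → ∀ a ∈ s, ∀ b ∈ t,
      φ (jgen ω H SA g a ⊗ₜ jgen ω H SB g' b) = ψ (jgen ω H SA g a ⊗ₜ jgen ω H SB g' b)) :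
    φ = ψ := by
  have h_same' : ∀ (g : G), ∀ a ∈ s, ∀ b : B,
      φ (jgen ω H SA g a ⊗ₜ jgen ω H SB g b) = ψ (jgen ω H SA g a ⊗ₜ jgen ω H SB g b) := by
    intro g a ha
    let mkA := TensorProduct.mk k _ (IndCarrier ω H SB) (jgen ω H SA g a)
    exact LinearMap.congr_fun (LinearMap.ext_on (f := φ ∘ₗ mkA ∘ₗ jgenₗ ω H SB g)
      (g := ψ ∘ₗ mkA ∘ₗ jgenₗ ω H SB g) ht (h_same g a ha))
  refine LinearMap.ext_on (TensorProduct.span_image2_tmul_eq_top (span_jgen ω H SA hs)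
    (span_jgen ω H SB ht)) ?_
  rintro _ ⟨_, ⟨_, ⟨g, rfl⟩, a, ha, rfl⟩, _, ⟨_, ⟨g', rfl⟩, b, hb, rfl⟩, rfl⟩
  beta_reduce
  by_cases hcos : g⁻¹ * g' ∈ H
  · obtain ⟨e, he⟩ := ht_hom b hb
    rw [← mul_inv_cancel_left g g', jgen_mul ω H SB g (h := ⟨g⁻¹ * g', hcos⟩) he,
      TensorProduct.tmul_smul, map_smul, map_smul, h_same' g a ha]
  · exact h_cross g g' hcos a ha b hb

theorem mu_comp_nu_eq_id {SA : YDOn k (resCocycle ω H) A} {SB : YDOn k (resCocycle ω H) B}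
    {SAB : YDOn k (resCocycle ω H) (A ⊗[k] B)}
    {μ : IndCarrier ω H SA ⊗[k] IndCarrier ω H SB →ₗ[k] IndCarrier ω H SAB}
    {ν : IndCarrier ω H SAB →ₗ[k] IndCarrier ω H SA ⊗[k] IndCarrier ω H SB}
    (hμ : IsMuMap ω H SA SB SAB μ) (hν : IsNuMap ω H SA SB SAB ν) : μ ∘ₗ ν = LinearMap.id := by
  refine LinearMap.ext_on (span_jgen ω H SAB (span_homogeneous_tmul SA SB)) ?_
  rintro _ ⟨_, ⟨g, rfl⟩, _, ⟨a, ⟨_, ⟨d, rfl⟩, ha⟩, b, ⟨_, ⟨e, rfl⟩, hb⟩, rfl⟩, rfl⟩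
  rw [LinearMap.comp_apply, hν g d e a b ha hb, map_smul, hμ.2 g d e a b ha hb, smul_smul,
    ← Units.val_mul, mul_inv_cancel, Units.val_one, one_smul]
  rfl

end Induced

section Frobenius

variable {k : Type*} [Field k] {G : Type*} [Group G] [DecidableEq G] {ω : G → G → G → kˣ}
  {H : Subgroup G} {V W U : Type*} [AddCommGroup V] [Module k V] [AddCommGroup W] [Module k W]
  [AddCommGroup U] [Module k U]
  {SV : YDOn k (resCocycle ω H) V} {SW : YDOn k (resCocycle ω H) W}
  {SU : YDOn k (resCocycle ω H) U}
  {SVW : YDOn k (resCocycle ω H) (V ⊗[k] W)} {SWU : YDOn k (resCocycle ω H) (W ⊗[k] U)}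
  {SVW_U : YDOn k (resCocycle ω H) ((V ⊗[k] W) ⊗[k] U)}
  {SV_WU : YDOn k (resCocycle ω H) (V ⊗[k] (W ⊗[k] U))}
  {TV : YDOn k ω (IndCarrier ω H SV)} {TW : YDOn k ω (IndCarrier ω H SW)}
  {TU : YDOn k ω (IndCarrier ω H SU)}

theorem frobenius_assocInv (hω : IsCocycle ω) (hSVW : IsTensorStruct SV SW SVW)
    (hSWU : IsTensorStruct SW SU SWU)
    {αH' : V ⊗[k] (W ⊗[k] U) →ₗ[k] (V ⊗[k] W) ⊗[k] U} (hαH' : IsAssocInvMap SV SW SU αH')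
    (hTV : IsIndStruct ω H SV TV) (hTW : IsIndStruct ω H SW TW) (hTU : IsIndStruct ω H SU TU)
    {Iα' : IndCarrier ω H SV_WU →ₗ[k] IndCarrier ω H SVW_U}
    (hIα' : IsIndMap ω H SV_WU SVW_U αH' Iα')
    {μ₁ : IndCarrier ω H SV ⊗[k] IndCarrier ω H SW →ₗ[k] IndCarrier ω H SVW}
    (hμ₁ : IsMuMap ω H SV SW SVW μ₁)
    {μ₄ : IndCarrier ω H SV ⊗[k] IndCarrier ω H SWU →ₗ[k] IndCarrier ω H SV_WU}
    (hμ₄ : IsMuMap ω H SV SWU SV_WU μ₄)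
    {ν₂ : IndCarrier ω H SVW_U →ₗ[k] IndCarrier ω H SVW ⊗[k] IndCarrier ω H SU}
    (hν₂ : IsNuMap ω H SVW SU SVW_U ν₂)
    {ν₃ : IndCarrier ω H SWU →ₗ[k] IndCarrier ω H SW ⊗[k] IndCarrier ω H SU}
    (hν₃ : IsNuMap ω H SW SU SWU ν₃)
    {αG' : IndCarrier ω H SV ⊗[k] (IndCarrier ω H SW ⊗[k] IndCarrier ω H SU) →ₗ[k]
      (IndCarrier ω H SV ⊗[k] IndCarrier ω H SW) ⊗[k] IndCarrier ω H SU}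
    (hαG' : IsAssocInvMap TV TW TU αG') :
    ν₂ ∘ₗ Iα' ∘ₗ μ₄
      = TensorProduct.map μ₁ LinearMap.id ∘ₗ αG' ∘ₗ TensorProduct.map LinearMap.id ν₃ := by
  refine ind_tmul_ext SV.span_homogeneous (span_homogeneous_tmul SW SU) ?_ ?_ ?_
  · rintro _ ⟨w, ⟨_, ⟨e, rfl⟩, hw⟩, u, ⟨_, ⟨f, rfl⟩, hu⟩, rfl⟩
    exact ⟨e * f, hSWU.tmul_mem hw hu⟩
  · rintro g v ⟨_, ⟨d, rfl⟩, hv⟩ _ ⟨w, ⟨_, ⟨e, rfl⟩, hw⟩, u, ⟨_, ⟨f, rfl⟩, hu⟩, rfl⟩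
    simp only [LinearMap.comp_apply, TensorProduct.map_tmul, LinearMap.id_apply]
    rw [hμ₄.2 g d (e * f) v _ hv (hSWU.tmul_mem hw hu), map_smul, hIα', hαH' d e f v w u hv hw hu,
      jgen_smul, map_smul, map_smul, hν₂ g (d * e) f _ u (hSVW.tmul_mem hv hw) hu,
      hν₃ g e f w u hw hu, TensorProduct.tmul_smul, map_smul,
      hαG' _ _ _ _ _ _ (hTV.jgen_mem hv g) (hTW.jgen_mem hw g) (hTU.jgen_mem hu g),
      map_smul, map_smul, TensorProduct.map_tmul, hμ₁.2 g d e v w hv hw]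
    simp only [← TensorProduct.smul_tmul', smul_smul, LinearMap.id_apply]
    congr 1
    simp only [← Units.val_mul, resCocycle, Subgroup.coe_mul]
    congr 1
    have key := gamc_mul_gamc_mul hω g d e f
    apply_fun Additive.ofMul at key ⊢
    simp only [ofMul_mul, ofMul_inv] at key ⊢
    linear_combination (norm := abel) key
  · rintro g g' hcos v ⟨_, ⟨d, rfl⟩, hv⟩ _ ⟨w, ⟨_, ⟨e, rfl⟩, hw⟩, u, ⟨_, ⟨f, rfl⟩, hu⟩, rfl⟩
    simp only [LinearMap.comp_apply, TensorProduct.map_tmul, LinearMap.id_apply]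
    rw [hμ₄.1 g g' hcos, map_zero, map_zero, hν₃ g' e f w u hw hu, TensorProduct.tmul_smul,
      map_smul, hαG' _ _ _ _ _ _ (hTV.jgen_mem hv g) (hTW.jgen_mem hw g') (hTU.jgen_mem hu g'),
      map_smul, map_smul, TensorProduct.map_tmul, hμ₁.1 g g' hcos, TensorProduct.zero_tmul,
      smul_zero, smul_zero]

theorem frobenius_assoc (hω : IsCocycle ω) (hSVW : IsTensorStruct SV SW SVW)
    (hSWU : IsTensorStruct SW SU SWU)
    {αH : (V ⊗[k] W) ⊗[k] U →ₗ[k] V ⊗[k] (W ⊗[k] U)} (hαH : IsAssocMap SV SW SU αH)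
    (hTV : IsIndStruct ω H SV TV) (hTW : IsIndStruct ω H SW TW) (hTU : IsIndStruct ω H SU TU)
    {Iα : IndCarrier ω H SVW_U →ₗ[k] IndCarrier ω H SV_WU}
    (hIα : IsIndMap ω H SVW_U SV_WU αH Iα)
    {μ₂ : IndCarrier ω H SVW ⊗[k] IndCarrier ω H SU →ₗ[k] IndCarrier ω H SVW_U}
    (hμ₂ : IsMuMap ω H SVW SU SVW_U μ₂)
    {μ₃ : IndCarrier ω H SW ⊗[k] IndCarrier ω H SU →ₗ[k] IndCarrier ω H SWU}
    (hμ₃ : IsMuMap ω H SW SU SWU μ₃)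
    {ν₁ : IndCarrier ω H SVW →ₗ[k] IndCarrier ω H SV ⊗[k] IndCarrier ω H SW}
    (hν₁ : IsNuMap ω H SV SW SVW ν₁)
    {ν₄ : IndCarrier ω H SV_WU →ₗ[k] IndCarrier ω H SV ⊗[k] IndCarrier ω H SWU}
    (hν₄ : IsNuMap ω H SV SWU SV_WU ν₄)
    {αG : (IndCarrier ω H SV ⊗[k] IndCarrier ω H SW) ⊗[k] IndCarrier ω H SU →ₗ[k]
      IndCarrier ω H SV ⊗[k] (IndCarrier ω H SW ⊗[k] IndCarrier ω H SU)}
    (hαG : IsAssocMap TV TW TU αG) :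
    ν₄ ∘ₗ Iα ∘ₗ μ₂
      = TensorProduct.map LinearMap.id μ₃ ∘ₗ αG ∘ₗ TensorProduct.map ν₁ LinearMap.id := by
  refine ind_tmul_ext (span_homogeneous_tmul SV SW) SU.span_homogeneous ?_ ?_ ?_
  · rintro u ⟨_, ⟨f, rfl⟩, hu⟩
    exact ⟨f, hu⟩
  · rintro g _ ⟨v, ⟨_, ⟨d, rfl⟩, hv⟩, w, ⟨_, ⟨e, rfl⟩, hw⟩, rfl⟩ u ⟨_, ⟨f, rfl⟩, hu⟩
    simp only [LinearMap.comp_apply, TensorProduct.map_tmul, LinearMap.id_apply]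
    rw [hμ₂.2 g (d * e) f _ u (hSVW.tmul_mem hv hw) hu, map_smul, hIα, hαH d e f v w u hv hw hu,
      jgen_smul, map_smul, map_smul, hν₄ g d (e * f) v _ hv (hSWU.tmul_mem hw hu),
      hν₁ g d e v w hv hw, ← TensorProduct.smul_tmul', map_smul,
      hαG _ _ _ _ _ _ (hTV.jgen_mem hv g) (hTW.jgen_mem hw g) (hTU.jgen_mem hu g),
      map_smul, map_smul, TensorProduct.map_tmul, hμ₃.2 g e f w u hw hu]
    simp only [TensorProduct.tmul_smul, smul_smul, LinearMap.id_apply]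
    congr 1
    simp only [← Units.val_mul, resCocycle, Subgroup.coe_mul]
    congr 1
    have key := gamc_mul_gamc_mul hω g d e f
    apply_fun Additive.ofMul at key ⊢
    simp only [ofMul_mul, ofMul_inv] at key ⊢
    linear_combination (norm := abel) -key
  · rintro g g' hcos _ ⟨v, ⟨_, ⟨d, rfl⟩, hv⟩, w, ⟨_, ⟨e, rfl⟩, hw⟩, rfl⟩ u ⟨_, ⟨f, rfl⟩, hu⟩
    simp only [LinearMap.comp_apply, TensorProduct.map_tmul, LinearMap.id_apply]
    rw [hμ₂.1 g g' hcos, map_zero, map_zero, hν₁ g d e v w hv hw, ← TensorProduct.smul_tmul',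
      map_smul, hαG _ _ _ _ _ _ (hTV.jgen_mem hv g) (hTW.jgen_mem hw g) (hTU.jgen_mem hu g'),
      map_smul, map_smul, TensorProduct.map_tmul, hμ₃.1 g g' hcos, TensorProduct.tmul_zero,
      smul_zero, smul_zero]

end Frobenius

end DW

theorem induction_separable_frobenius_general {k : Type*} [Field k] {G : Type*}
    [Group G] [DecidableEq G] (ω : G → G → G → kˣ)
    (hω : IsCocycle ω) (H : Subgroup G) :
    -- the two Frobenius compatibility conditions
    (∀ (V W U : Type) [AddCommGroup V] [Module k V] [AddCommGroup W] [Module k W]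
        [AddCommGroup U] [Module k U]
        (SV : YDOn k (resCocycle ω H) V) (SW : YDOn k (resCocycle ω H) W)
        (SU : YDOn k (resCocycle ω H) U)
        (SVW : YDOn k (resCocycle ω H) (V ⊗[k] W)) (_ : IsTensorStruct SV SW SVW)
        (SWU : YDOn k (resCocycle ω H) (W ⊗[k] U)) (_ : IsTensorStruct SW SU SWU)
        (SVW_U : YDOn k (resCocycle ω H) ((V ⊗[k] W) ⊗[k] U))
        (_ : IsTensorStruct SVW SU SVW_U)
        (SV_WU : YDOn k (resCocycle ω H) (V ⊗[k] (W ⊗[k] U)))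
        (_ : IsTensorStruct SV SWU SV_WU)
        (αH : (V ⊗[k] W) ⊗[k] U →ₗ[k] V ⊗[k] (W ⊗[k] U)) (_ : IsAssocMap SV SW SU αH)
        (αH' : V ⊗[k] (W ⊗[k] U) →ₗ[k] (V ⊗[k] W) ⊗[k] U) (_ : IsAssocInvMap SV SW SU αH')
        (TV : YDOn k ω (IndCarrier ω H SV)) (_ : IsIndStruct ω H SV TV)
        (TW : YDOn k ω (IndCarrier ω H SW)) (_ : IsIndStruct ω H SW TW)
        (TU : YDOn k ω (IndCarrier ω H SU)) (_ : IsIndStruct ω H SU TU)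
        (Iα : IndCarrier ω H SVW_U →ₗ[k] IndCarrier ω H SV_WU)
        (_ : IsIndMap ω H SVW_U SV_WU αH Iα)
        (Iα' : IndCarrier ω H SV_WU →ₗ[k] IndCarrier ω H SVW_U)
        (_ : IsIndMap ω H SV_WU SVW_U αH' Iα')
        (μ₁ : IndCarrier ω H SV ⊗[k] IndCarrier ω H SW →ₗ[k] IndCarrier ω H SVW)
        (_ : IsMuMap ω H SV SW SVW μ₁)
        (μ₂ : IndCarrier ω H SVW ⊗[k] IndCarrier ω H SU →ₗ[k] IndCarrier ω H SVW_U)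
        (_ : IsMuMap ω H SVW SU SVW_U μ₂)
        (μ₃ : IndCarrier ω H SW ⊗[k] IndCarrier ω H SU →ₗ[k] IndCarrier ω H SWU)
        (_ : IsMuMap ω H SW SU SWU μ₃)
        (μ₄ : IndCarrier ω H SV ⊗[k] IndCarrier ω H SWU →ₗ[k] IndCarrier ω H SV_WU)
        (_ : IsMuMap ω H SV SWU SV_WU μ₄)
        (ν₁ : IndCarrier ω H SVW →ₗ[k] IndCarrier ω H SV ⊗[k] IndCarrier ω H SW)
        (_ : IsNuMap ω H SV SW SVW ν₁)
        (ν₂ : IndCarrier ω H SVW_U →ₗ[k] IndCarrier ω H SVW ⊗[k] IndCarrier ω H SU)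
        (_ : IsNuMap ω H SVW SU SVW_U ν₂)
        (ν₃ : IndCarrier ω H SWU →ₗ[k] IndCarrier ω H SW ⊗[k] IndCarrier ω H SU)
        (_ : IsNuMap ω H SW SU SWU ν₃)
        (ν₄ : IndCarrier ω H SV_WU →ₗ[k] IndCarrier ω H SV ⊗[k] IndCarrier ω H SWU)
        (_ : IsNuMap ω H SV SWU SV_WU ν₄)
        (αG : (IndCarrier ω H SV ⊗[k] IndCarrier ω H SW) ⊗[k] IndCarrier ω H SU →ₗ[k]
            IndCarrier ω H SV ⊗[k] (IndCarrier ω H SW ⊗[k] IndCarrier ω H SU))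
        (_ : IsAssocMap TV TW TU αG)
        (αG' : IndCarrier ω H SV ⊗[k] (IndCarrier ω H SW ⊗[k] IndCarrier ω H SU) →ₗ[k]
            (IndCarrier ω H SV ⊗[k] IndCarrier ω H SW) ⊗[k] IndCarrier ω H SU),
        IsAssocInvMap TV TW TU αG' →
        -- first Frobenius compatibility
        (ν₂ ∘ₗ Iα' ∘ₗ μ₄
            = TensorProduct.map μ₁ LinearMap.id ∘ₗ αG' ∘ₗ TensorProduct.map LinearMap.id ν₃) ∧
        -- second Frobenius compatibility
        ν₄ ∘ₗ Iα ∘ₗ μ₂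
          = TensorProduct.map LinearMap.id μ₃ ∘ₗ αG ∘ₗ TensorProduct.map ν₁ LinearMap.id) ∧
    -- separability: μ_{V,W} ∘ ν_{V,W} = id
    (∀ (V W : Type) [AddCommGroup V] [Module k V] [AddCommGroup W] [Module k W]
        (SV : YDOn k (resCocycle ω H) V) (SW : YDOn k (resCocycle ω H) W)
        (SVW : YDOn k (resCocycle ω H) (V ⊗[k] W)), IsTensorStruct SV SW SVW →
      ∀ (μ : IndCarrier ω H SV ⊗[k] IndCarrier ω H SW →ₗ[k] IndCarrier ω H SVW)
        (ν : IndCarrier ω H SVW →ₗ[k] IndCarrier ω H SV ⊗[k] IndCarrier ω H SW),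
        IsMuMap ω H SV SW SVW μ → IsNuMap ω H SV SW SVW ν → μ ∘ₗ ν = LinearMap.id) := by
  refine ⟨fun V W U _ _ _ _ _ _ SV SW SU SVW hSVW SWU hSWU SVW_U _ SV_WU _ αH hαH αH' hαH'
      TV hTV TW hTW TU hTU Iα hIα Iα' hIα' μ₁ hμ₁ μ₂ hμ₂ μ₃ hμ₃ μ₄ hμ₄ ν₁ hν₁ ν₂ hν₂ ν₃ hν₃ ν₄ hν₄
      αG hαG αG' hαG' => ⟨?_, ?_⟩,
    fun V W _ _ _ _ SV SW SVW _ μ ν hμ hν => mu_comp_nu_eq_id hμ hν⟩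
  · exact frobenius_assocInv hω hSVW hSWU hαH' hTV hTW hTU hIα' hμ₁ hμ₄ hν₂ hν₃ hαG'
  · exact frobenius_assoc hω hSVW hSWU hαH hTV hTW hTU hIα hμ₂ hμ₃ hν₁ hν₄ hαG

/-- Proposition 3.10: the induction functor `I : Z(Vect_H^ω) → Z(Vect_G^ω)`,
equipped with the lax structure `μ` (with unit `1 ↦ ∑ᵢ gᵢ⊗1`) and the oplax structure `ν`
(with counit `g⊗1 ↦ 1`), is a separable Frobenius monoidal functor: the two Frobenius
compatibility conditions hold and `μ_{V,W} ∘ ν_{V,W} = id_{I(V⊗W)}` for all `V, W`. -/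
theorem induction_separable_frobenius {k : Type*} [Field k] [IsAlgClosed k] {G : Type*}
    [Group G] [Finite G] [DecidableEq G] (ω : G → G → G → kˣ)
    (hω : IsCocycle ω) (hnorm : IsNormalized ω) (H : Subgroup G) :
    -- the two Frobenius compatibility conditions
    (∀ (V W U : Type) [AddCommGroup V] [Module k V] [AddCommGroup W] [Module k W]
        [AddCommGroup U] [Module k U]
        (SV : YDOn k (resCocycle ω H) V) (SW : YDOn k (resCocycle ω H) W)
        (SU : YDOn k (resCocycle ω H) U)
        (SVW : YDOn k (resCocycle ω H) (V ⊗[k] W)) (_ : IsTensorStruct SV SW SVW)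
        (SWU : YDOn k (resCocycle ω H) (W ⊗[k] U)) (_ : IsTensorStruct SW SU SWU)
        (SVW_U : YDOn k (resCocycle ω H) ((V ⊗[k] W) ⊗[k] U))
        (_ : IsTensorStruct SVW SU SVW_U)
        (SV_WU : YDOn k (resCocycle ω H) (V ⊗[k] (W ⊗[k] U)))
        (_ : IsTensorStruct SV SWU SV_WU)
        (αH : (V ⊗[k] W) ⊗[k] U →ₗ[k] V ⊗[k] (W ⊗[k] U)) (_ : IsAssocMap SV SW SU αH)
        (αH' : V ⊗[k] (W ⊗[k] U) →ₗ[k] (V ⊗[k] W) ⊗[k] U) (_ : IsAssocInvMap SV SW SU αH')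
        (TV : YDOn k ω (IndCarrier ω H SV)) (_ : IsIndStruct ω H SV TV)
        (TW : YDOn k ω (IndCarrier ω H SW)) (_ : IsIndStruct ω H SW TW)
        (TU : YDOn k ω (IndCarrier ω H SU)) (_ : IsIndStruct ω H SU TU)
        (Iα : IndCarrier ω H SVW_U →ₗ[k] IndCarrier ω H SV_WU)
        (_ : IsIndMap ω H SVW_U SV_WU αH Iα)
        (Iα' : IndCarrier ω H SV_WU →ₗ[k] IndCarrier ω H SVW_U)
        (_ : IsIndMap ω H SV_WU SVW_U αH' Iα')
        (μ₁ : IndCarrier ω H SV ⊗[k] IndCarrier ω H SW →ₗ[k] IndCarrier ω H SVW)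
        (_ : IsMuMap ω H SV SW SVW μ₁)
        (μ₂ : IndCarrier ω H SVW ⊗[k] IndCarrier ω H SU →ₗ[k] IndCarrier ω H SVW_U)
        (_ : IsMuMap ω H SVW SU SVW_U μ₂)
        (μ₃ : IndCarrier ω H SW ⊗[k] IndCarrier ω H SU →ₗ[k] IndCarrier ω H SWU)
        (_ : IsMuMap ω H SW SU SWU μ₃)
        (μ₄ : IndCarrier ω H SV ⊗[k] IndCarrier ω H SWU →ₗ[k] IndCarrier ω H SV_WU)
        (_ : IsMuMap ω H SV SWU SV_WU μ₄)
        (ν₁ : IndCarrier ω H SVW →ₗ[k] IndCarrier ω H SV ⊗[k] IndCarrier ω H SW)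
        (_ : IsNuMap ω H SV SW SVW ν₁)
        (ν₂ : IndCarrier ω H SVW_U →ₗ[k] IndCarrier ω H SVW ⊗[k] IndCarrier ω H SU)
        (_ : IsNuMap ω H SVW SU SVW_U ν₂)
        (ν₃ : IndCarrier ω H SWU →ₗ[k] IndCarrier ω H SW ⊗[k] IndCarrier ω H SU)
        (_ : IsNuMap ω H SW SU SWU ν₃)
        (ν₄ : IndCarrier ω H SV_WU →ₗ[k] IndCarrier ω H SV ⊗[k] IndCarrier ω H SWU)
        (_ : IsNuMap ω H SV SWU SV_WU ν₄)
        (αG : (IndCarrier ω H SV ⊗[k] IndCarrier ω H SW) ⊗[k] IndCarrier ω H SU →ₗ[k]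
            IndCarrier ω H SV ⊗[k] (IndCarrier ω H SW ⊗[k] IndCarrier ω H SU))
        (_ : IsAssocMap TV TW TU αG)
        (αG' : IndCarrier ω H SV ⊗[k] (IndCarrier ω H SW ⊗[k] IndCarrier ω H SU) →ₗ[k]
            (IndCarrier ω H SV ⊗[k] IndCarrier ω H SW) ⊗[k] IndCarrier ω H SU),
        IsAssocInvMap TV TW TU αG' →
        -- first Frobenius compatibility
        (ν₂ ∘ₗ Iα' ∘ₗ μ₄
            = TensorProduct.map μ₁ LinearMap.id ∘ₗ αG' ∘ₗ TensorProduct.map LinearMap.id ν₃) ∧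
        -- second Frobenius compatibility
        ν₄ ∘ₗ Iα ∘ₗ μ₂
          = TensorProduct.map LinearMap.id μ₃ ∘ₗ αG ∘ₗ TensorProduct.map ν₁ LinearMap.id) ∧
    -- separability: μ_{V,W} ∘ ν_{V,W} = id
    (∀ (V W : Type) [AddCommGroup V] [Module k V] [AddCommGroup W] [Module k W]
        (SV : YDOn k (resCocycle ω H) V) (SW : YDOn k (resCocycle ω H) W)
        (SVW : YDOn k (resCocycle ω H) (V ⊗[k] W)), IsTensorStruct SV SW SVW →
      ∀ (μ : IndCarrier ω H SV ⊗[k] IndCarrier ω H SW →ₗ[k] IndCarrier ω H SVW)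
        (ν : IndCarrier ω H SVW →ₗ[k] IndCarrier ω H SV ⊗[k] IndCarrier ω H SW),
        IsMuMap ω H SV SW SVW μ → IsNuMap ω H SV SW SVW ν → μ ∘ₗ ν = LinearMap.id) :=
  induction_separable_frobenius_general ω hω H
end

section
/- Assume the index |G:H| is invertible in k. Then the coset algebra A_H is a rigid Frobenius algebra in Z(Vect_G^ω): it is a connected commutative Frobenius algebra with m∘Δ = id_{A_H}, ε(1_{A_H}) = |G:H|·1, and quantum dimension dim_j(A_H) = |G:H| ≠ 0. -/
open scoped TensorProduct

namespace DW

variable (k : Type*) [Field k] {G : Type*} [Group G] (H : Subgroup G)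
variable [Fintype (G ⧸ H)] [DecidableEq (G ⧸ H)]

/-- The comultiplication of the coset algebra: `Δ(δ_{gH}) = δ_{gH} ⊗ δ_{gH}`. -/
noncomputable def AHcomul :
    ((G ⧸ H) → k) →ₗ[k] ((G ⧸ H) → k) ⊗[k] ((G ⧸ H) → k) :=
  ∑ x : G ⧸ H, (LinearMap.proj x).smulRight (Pi.single x (1 : k) ⊗ₜ[k] Pi.single x (1 : k))

/-- The counit of the coset algebra: `ε(δ_{gH}) = 1`. -/
def AHcounit : ((G ⧸ H) → k) →ₗ[k] k :=
  ∑ x : G ⧸ H, LinearMap.proj x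

end DW

open DW

/-! Because `ω` is normalized and `A_H` is concentrated in degree `1`, all structure maps of
`Z(Vect_G^ω)` between such objects are untwisted: the tensor action is diagonal, the associator
is `TensorProduct.assoc` and the braiding is the flip. So `A_H` is simply the commutative algebra
of functions on the `G`-set `G/H`, and every axiom is checked on the basis `δ_x`: `m∘Δ = id`
because the `δ_x` are orthogonal idempotents, `ε(1) = |G:H|` counts the cosets, and the invariant
functions are the constants since `G` acts transitively on `G/H`. -/

namespace DW

section Normalized

variable {G : Type*} [Group G] {M : Type*} [CommGroup M] {ω : G → G → G → M}

theorem tauc_apply_one (hω : IsNormalized ω) (h g : G) : tauc ω h g 1 = 1 := by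
  simp [tauc, hω h g 1 (by simp), hω 1 h g (by simp), hω h 1 g (by simp)]

theorem gamc_one_one (hω : IsNormalized ω) (h : G) : gamc ω h 1 1 = 1 := by
  simp [gamc, hω h 1 1 (by simp), hω 1 1 h (by simp), hω 1 h 1 (by simp)]

end Normalized

section TrivialGrading

variable {k : Type*} [Field k] {G : Type*} [Group G] [DecidableEq G] {ω : G → G → G → kˣ}

theorem isInternal_ite_one_top_bot (V : Type*) [AddCommGroup V] [Module k V] :
    DirectSum.IsInternal (fun d : G => if d = 1 then (⊤ : Submodule k V) else ⊥) := by
  refine DirectSum.isInternal_submodule_of_iSupIndep_of_iSup_eq_top (fun d => ?_)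
    (eq_top_iff.2 (le_iSup_of_le 1 (by simp)))
  by_cases hd : d = 1
  · simp +contextual [hd]
  · simp [hd]

variable {M : Type*} [AddCommGroup M] [Module k M]

def YDOn.ofAction (hω : IsNormalized ω) (act : G → M →ₗ[k] M)
    (act_one : act 1 = LinearMap.id) (act_mul : ∀ h g, act h ∘ₗ act g = act (h * g)) : YDOn k ω M where
  grading d := if d = 1 then ⊤ else ⊥
  internal := isInternal_ite_one_top_bot M
  act := act
  act_one := act_one
  act_mem g d v hv := by
    by_cases hd : d = 1
    · simp [hd]
    · simp_all
  act_act h g d v hv := by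
    by_cases hd : d = 1
    · simp [hd, tauc_apply_one hω, ← act_mul]
    · simp_all

theorem YDOn.grading_eq_bot_of_grading_one_eq_top (S : YDOn k ω M) (hS : S.grading 1 = ⊤)
    {d : G} (hd : d ≠ 1) : S.grading d = ⊥ :=
  disjoint_top.mp <| hS ▸ S.internal.submodule_iSupIndep.pairwiseDisjoint hd

theorem YDOn.eq_zero_of_mem_grading (S : YDOn k ω M) (hS : S.grading 1 = ⊤)
    {d : G} (hd : d ≠ 1) {v : M} (hv : v ∈ S.grading d) : v = 0 := by
  rwa [S.grading_eq_bot_of_grading_one_eq_top hS hd, Submodule.mem_bot] at hv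

theorem isYDHom_iff_of_grading_one_eq_top {N : Type*} [AddCommGroup N] [Module k N]
    {S : YDOn k ω M} {T : YDOn k ω N} (hS : S.grading 1 = ⊤) (hT : T.grading 1 = ⊤)
    {f : M →ₗ[k] N} : IsYDHom S T f ↔ ∀ g : G, f ∘ₗ S.act g = T.act g ∘ₗ f := by
  refine ⟨And.right, fun hf => ⟨fun d v hv => ?_, hf⟩⟩
  rcases eq_or_ne d 1 with rfl | hd
  · simp [hT]
  · simp [S.eq_zero_of_mem_grading hS hd hv]

variable {U V W : Type*} [AddCommGroup U] [Module k U] [AddCommGroup V] [Module k V]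
  [AddCommGroup W] [Module k W] {SU : YDOn k ω U} {SV : YDOn k ω V} {SW : YDOn k ω W}

theorem IsTensorStruct.grading_one_eq_top {T : YDOn k ω (V ⊗[k] W)}
    (hT : IsTensorStruct SV SW T) (hV : SV.grading 1 = ⊤) (hW : SW.grading 1 = ⊤) :
    T.grading 1 = ⊤ :=
  eq_top_iff.2 <| hT.1 1 ▸ le_iSup_of_le 1 (by simp [hV, hW])

theorem IsTensorStruct.act_eq_map (hω : IsNormalized ω) {T : YDOn k ω (V ⊗[k] W)}
    (hT : IsTensorStruct SV SW T) (hV : SV.grading 1 = ⊤) (hW : SW.grading 1 = ⊤) (g : G) :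
    T.act g = TensorProduct.map (SV.act g) (SW.act g) :=
  TensorProduct.ext' fun v w => by
    simp [hT.2 g 1 1 v w (by simp [hV]) (by simp [hW]), gamc_one_one hω]

theorem IsAssocMap.eq_assoc (hω : IsNormalized ω)
    {a : (U ⊗[k] V) ⊗[k] W →ₗ[k] U ⊗[k] (V ⊗[k] W)}
    (ha : IsAssocMap SU SV SW a) (hU : SU.grading 1 = ⊤) (hV : SV.grading 1 = ⊤)
    (hW : SW.grading 1 = ⊤) : a = (TensorProduct.assoc k U V W).toLinearMap :=
  TensorProduct.ext_threefold fun u v w => by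
    simp [ha 1 1 1 u v w (by simp [hU]) (by simp [hV]) (by simp [hW]), hω 1 1 1 (by simp)]

theorem IsAssocInvMap.eq_assoc_symm (hω : IsNormalized ω)
    {a : U ⊗[k] (V ⊗[k] W) →ₗ[k] (U ⊗[k] V) ⊗[k] W}
    (ha : IsAssocInvMap SU SV SW a) (hU : SU.grading 1 = ⊤) (hV : SV.grading 1 = ⊤)
    (hW : SW.grading 1 = ⊤) : a = (TensorProduct.assoc k U V W).symm.toLinearMap :=
  TensorProduct.ext_threefold' fun u v w => by
    simp [ha 1 1 1 u v w (by simp [hU]) (by simp [hV]) (by simp [hW]), hω 1 1 1 (by simp)]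

theorem IsBraidingMap.eq_comm {c : V ⊗[k] W →ₗ[k] W ⊗[k] V} (hc : IsBraidingMap SV SW c)
    (hV : SV.grading 1 = ⊤) : c = (TensorProduct.comm k V W).toLinearMap :=
  TensorProduct.ext' fun v w => by simp [hc 1 v w (by simp [hV]), SW.act_one]

end TrivialGrading

theorem _root_.Pi.single_one_mul_single_one {ι R : Type*} [DecidableEq ι] [MulZeroOneClass R]
    (x y : ι) :
    (Pi.single x 1 * Pi.single y 1 : ι → R) = if x = y then Pi.single x 1 else 0 := by
  split_ifs with h
  · simp [h, ← Pi.single_mul]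
  · ext z
    by_cases hz : z = x <;> simp_all [Pi.single_apply]

theorem _root_.LinearMap.mul'_comp_map_mul'_id {R A : Type*} [CommSemiring R] [Semiring A]
    [Algebra R A] :
    LinearMap.mul' R A ∘ₗ TensorProduct.map (LinearMap.mul' R A) LinearMap.id
      = LinearMap.mul' R A ∘ₗ TensorProduct.map LinearMap.id (LinearMap.mul' R A)
        ∘ₗ (TensorProduct.assoc R A A A).toLinearMap :=
  TensorProduct.ext_threefold fun u v w => by simp [mul_assoc]

section CosetAlgebra

variable (k : Type*) [Field k] {G : Type*} [Group G] (H : Subgroup G)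

theorem cosetAct_one : cosetAct k H 1 = LinearMap.id := by
  ext f x
  simp [cosetAct]

theorem cosetAct_comp_cosetAct (h g : G) :
    cosetAct k H h ∘ₗ cosetAct k H g = cosetAct k H (h * g) := by
  ext f x
  simp [cosetAct, mul_smul]

def cosetYD [DecidableEq G] {ω : G → G → G → kˣ} (hω : IsNormalized ω) :
    YDOn k ω ((G ⧸ H) → k) :=
  YDOn.ofAction hω (cosetAct k H) (cosetAct_one k H) (cosetAct_comp_cosetAct k H)

theorem cosetAct_mul (c : G) (v w : (G ⧸ H) → k) :
    cosetAct k H c (v * w) = cosetAct k H c v * cosetAct k H c w := rfl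

theorem cosetAct_apply_one (c : G) : cosetAct k H c 1 = 1 := rfl

theorem mul'_comp_map_cosetAct (c : G) :
    LinearMap.mul' k ((G ⧸ H) → k) ∘ₗ TensorProduct.map (cosetAct k H c) (cosetAct k H c) =
      cosetAct k H c ∘ₗ LinearMap.mul' k ((G ⧸ H) → k) :=
  TensorProduct.ext' fun v w => by simp [cosetAct_mul]

/-- `G` acts transitively on `G ⧸ H`, so the invariant functions are the constants. -/
theorem iInf_eqLocus_cosetAct :
    ⨅ g : G, LinearMap.eqLocus (cosetAct k H g) LinearMap.id = k ∙ (1 : (G ⧸ H) → k) := by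
  refine le_antisymm (fun v hv => ?_) ?_
  · have hinv : ∀ g x, v (g⁻¹ • x) = v x := fun g x =>
      congrFun ((Submodule.mem_iInf _).1 hv g) x
    refine Submodule.mem_span_singleton.2 ⟨v (1 : G), funext fun x => ?_⟩
    induction x using QuotientGroup.induction_on with
    | H g => simpa using hinv g g
  · simp [Submodule.span_le, cosetAct_apply_one]

theorem cosetAct_single [DecidableEq (G ⧸ H)] (c : G) (x : G ⧸ H) :
    cosetAct k H c (Pi.single x 1) = Pi.single (c • x) 1 := by
  ext y
  simp [cosetAct, Pi.single_apply, inv_smul_eq_iff]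

variable [Fintype (G ⧸ H)]

theorem AHcounit_one : AHcounit k H 1 = H.index := by
  simp [AHcounit, Subgroup.index_eq_card, Nat.card_eq_fintype_card]

variable [DecidableEq (G ⧸ H)]

theorem AHcomul_single (x : G ⧸ H) :
    AHcomul k H (Pi.single x 1) = Pi.single x 1 ⊗ₜ[k] Pi.single x 1 := by
  simp [AHcomul, Pi.single_apply]

theorem AHcounit_single (x : G ⧸ H) : AHcounit k H (Pi.single x 1) = 1 := by
  simp [AHcounit, Pi.single_apply]

theorem mul'_comp_AHcomul : LinearMap.mul' k ((G ⧸ H) → k) ∘ₗ AHcomul k H = LinearMap.id :=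
  (Pi.basisFun k _).ext fun x => by simp [AHcomul_single, ← Pi.single_mul]

theorem AHcomul_comp_cosetAct (c : G) :
    AHcomul k H ∘ₗ cosetAct k H c =
      TensorProduct.map (cosetAct k H c) (cosetAct k H c) ∘ₗ AHcomul k H :=
  (Pi.basisFun k _).ext fun x => by simp [AHcomul_single, cosetAct_single]

theorem AHcounit_comp_cosetAct (c : G) : AHcounit k H ∘ₗ cosetAct k H c = AHcounit k H :=
  (Pi.basisFun k _).ext fun x => by simp [AHcounit_single, cosetAct_single]

theorem AHcomul_coassoc :
    (TensorProduct.assoc k _ _ _).toLinearMap ∘ₗ TensorProduct.map (AHcomul k H) LinearMap.id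
        ∘ₗ AHcomul k H = TensorProduct.map LinearMap.id (AHcomul k H) ∘ₗ AHcomul k H :=
  (Pi.basisFun k _).ext fun x => by simp [AHcomul_single]

theorem lid_comp_map_AHcounit_comp_AHcomul :
    (TensorProduct.lid k ((G ⧸ H) → k)).toLinearMap
      ∘ₗ TensorProduct.map (AHcounit k H) LinearMap.id ∘ₗ AHcomul k H = LinearMap.id :=
  (Pi.basisFun k _).ext fun x => by simp [AHcomul_single, AHcounit_single]

theorem rid_comp_map_AHcounit_comp_AHcomul :
    (TensorProduct.rid k ((G ⧸ H) → k)).toLinearMap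
      ∘ₗ TensorProduct.map LinearMap.id (AHcounit k H) ∘ₗ AHcomul k H = LinearMap.id :=
  (Pi.basisFun k _).ext fun x => by simp [AHcomul_single, AHcounit_single]

theorem map_mul'_comp_assoc_symm_comp_map_AHcomul :
    TensorProduct.map (LinearMap.mul' k ((G ⧸ H) → k)) LinearMap.id
        ∘ₗ (TensorProduct.assoc k _ _ _).symm.toLinearMap
        ∘ₗ TensorProduct.map LinearMap.id (AHcomul k H)
      = AHcomul k H ∘ₗ LinearMap.mul' k ((G ⧸ H) → k) :=
  TensorProduct.ext <| (Pi.basisFun k _).ext fun x => (Pi.basisFun k _).ext fun y => by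
    by_cases h : x = y <;> simp [AHcomul_single, Pi.single_one_mul_single_one, h]

theorem map_mul'_comp_assoc_comp_map_AHcomul :
    TensorProduct.map LinearMap.id (LinearMap.mul' k ((G ⧸ H) → k))
        ∘ₗ (TensorProduct.assoc k _ _ _).toLinearMap
        ∘ₗ TensorProduct.map (AHcomul k H) LinearMap.id
      = AHcomul k H ∘ₗ LinearMap.mul' k ((G ⧸ H) → k) :=
  TensorProduct.ext <| (Pi.basisFun k _).ext fun x => (Pi.basisFun k _).ext fun y => by
    by_cases h : x = y <;> simp [AHcomul_single, Pi.single_one_mul_single_one, h]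

end CosetAlgebra

end DW

theorem cosetAlgebra_rigidFrobenius_general {k : Type*} [Field k] {G : Type*}
    [Group G] [DecidableEq G] (ω : G → G → G → kˣ)
    (hnorm : IsNormalized ω) (H : Subgroup G)
    [Fintype (G ⧸ H)] [DecidableEq (G ⧸ H)]
    (hind : (H.index : k) ≠ 0) :
    ∃ SA : YDOn k ω ((G ⧸ H) → k),
      -- the Yetter–Drinfeld structure of A_H: trivial grading and action c·δ_{gH} = δ_{cgH}
      SA.grading 1 = ⊤ ∧ (∀ d : G, d ≠ 1 → SA.grading d = ⊥) ∧
      (∀ c : G, SA.act c = cosetAct k H c) ∧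
      -- the multiplication and unit are morphisms in Z(Vect_G^ω)
      (∀ T : YDOn k ω (((G ⧸ H) → k) ⊗[k] ((G ⧸ H) → k)),
          IsTensorStruct SA SA T → IsYDHom T SA (LinearMap.mul' k ((G ⧸ H) → k))) ∧
      ((1 : (G ⧸ H) → k) ∈ SA.grading 1) ∧
      (∀ g : G, SA.act g (1 : (G ⧸ H) → k) = 1) ∧
      -- associativity and unitality in the category
      (∀ a, IsAssocMap SA SA SA a →
          LinearMap.mul' k ((G ⧸ H) → k)
              ∘ₗ TensorProduct.map (LinearMap.mul' k ((G ⧸ H) → k)) LinearMap.id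
            = LinearMap.mul' k ((G ⧸ H) → k)
              ∘ₗ TensorProduct.map LinearMap.id (LinearMap.mul' k ((G ⧸ H) → k)) ∘ₗ a) ∧
      (∀ x : (G ⧸ H) → k,
          LinearMap.mul' k ((G ⧸ H) → k) (1 ⊗ₜ[k] x) = x ∧
          LinearMap.mul' k ((G ⧸ H) → k) (x ⊗ₜ[k] 1) = x) ∧
      -- commutativity
      (∀ c, IsBraidingMap SA SA c →
          LinearMap.mul' k ((G ⧸ H) → k) ∘ₗ c = LinearMap.mul' k ((G ⧸ H) → k)) ∧
      -- connectedness: Hom(1, A_H) is one-dimensional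
      Module.finrank k
        ↥(SA.grading 1 ⊓ ⨅ g : G,
            LinearMap.eqLocus (SA.act g) (LinearMap.id : ((G ⧸ H) → k) →ₗ[k] _)) = 1 ∧
      -- Δ and ε are morphisms in Z(Vect_G^ω)
      (∀ T : YDOn k ω (((G ⧸ H) → k) ⊗[k] ((G ⧸ H) → k)),
          IsTensorStruct SA SA T → IsYDHom SA T (AHcomul k H)) ∧
      (∀ g : G, AHcounit k H ∘ₗ SA.act g = AHcounit k H) ∧
      (∀ d : G, d ≠ 1 → ∀ v ∈ SA.grading d, AHcounit k H v = 0) ∧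
      -- coassociativity and counitality
      (∀ a, IsAssocMap SA SA SA a →
          a ∘ₗ TensorProduct.map (AHcomul k H) LinearMap.id ∘ₗ AHcomul k H
            = TensorProduct.map LinearMap.id (AHcomul k H) ∘ₗ AHcomul k H) ∧
      ((TensorProduct.lid k ((G ⧸ H) → k)).toLinearMap
          ∘ₗ TensorProduct.map (AHcounit k H) LinearMap.id ∘ₗ AHcomul k H = LinearMap.id) ∧
      ((TensorProduct.rid k ((G ⧸ H) → k)).toLinearMap
          ∘ₗ TensorProduct.map LinearMap.id (AHcounit k H) ∘ₗ AHcomul k H = LinearMap.id) ∧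
      -- the Frobenius compatibility conditions
      (∀ a a', IsAssocMap SA SA SA a → IsAssocInvMap SA SA SA a' →
          TensorProduct.map (LinearMap.mul' k ((G ⧸ H) → k)) LinearMap.id ∘ₗ a'
              ∘ₗ TensorProduct.map LinearMap.id (AHcomul k H)
            = AHcomul k H ∘ₗ LinearMap.mul' k ((G ⧸ H) → k) ∧
          AHcomul k H ∘ₗ LinearMap.mul' k ((G ⧸ H) → k)
            = TensorProduct.map LinearMap.id (LinearMap.mul' k ((G ⧸ H) → k)) ∘ₗ a
              ∘ₗ TensorProduct.map (AHcomul k H) LinearMap.id) ∧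
      -- specialness: m∘Δ = id and ε(1) = |G:H|
      (LinearMap.mul' k ((G ⧸ H) → k) ∘ₗ AHcomul k H = LinearMap.id) ∧
      (AHcounit k H (1 : (G ⧸ H) → k) = (H.index : k)) ∧
      -- quantum dimension dim_j(A_H) = |G:H| ≠ 0
      (AHcounit k H (LinearMap.mul' k ((G ⧸ H) → k) (AHcomul k H (1 : (G ⧸ H) → k)))
          = (H.index : k)) ∧
      (H.index : k) ≠ 0 := by
  set A := cosetYD k H hnorm
  have hA : A.grading 1 = ⊤ := if_pos rfl
  have hδ : LinearMap.mul' k ((G ⧸ H) → k) (AHcomul k H 1) = 1 :=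
    LinearMap.congr_fun (mul'_comp_AHcomul k H) 1
  refine ⟨A, hA, fun d hd => if_neg hd, fun c => rfl, fun T hT => ?_, hA ▸ trivial,
    cosetAct_apply_one k H, fun a ha => ?_, fun x => ⟨one_mul x, mul_one x⟩, fun c hc => ?_, ?_,
    fun T hT => ?_, AHcounit_comp_cosetAct k H,
    fun d hd v hv => by rw [A.eq_zero_of_mem_grading hA hd hv, map_zero], fun a ha => ?_,
    lid_comp_map_AHcounit_comp_AHcomul k H, rid_comp_map_AHcounit_comp_AHcomul k H,
    fun a a' ha ha' => ?_, mul'_comp_AHcomul k H, AHcounit_one k H, by rw [hδ, AHcounit_one],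
    hind⟩
  · refine (isYDHom_iff_of_grading_one_eq_top (hT.grading_one_eq_top hA hA) hA).2 fun g => ?_
    rw [hT.act_eq_map hnorm hA hA]
    exact mul'_comp_map_cosetAct k H g
  · rw [ha.eq_assoc hnorm hA hA hA]
    exact LinearMap.mul'_comp_map_mul'_id
  · rw [hc.eq_comm hA]
    exact LinearMap.mul'_comp_comm
  · rw [hA, top_inf_eq]
    exact (iInf_eqLocus_cosetAct k H).symm ▸ finrank_span_singleton one_ne_zero
  · refine (isYDHom_iff_of_grading_one_eq_top hA (hT.grading_one_eq_top hA hA)).2 fun g => ?_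
    rw [hT.act_eq_map hnorm hA hA]
    exact AHcomul_comp_cosetAct k H g
  · rw [ha.eq_assoc hnorm hA hA hA]
    exact AHcomul_coassoc k H
  · rw [ha.eq_assoc hnorm hA hA hA, ha'.eq_assoc_symm hnorm hA hA hA]
    exact ⟨map_mul'_comp_assoc_symm_comp_map_AHcomul k H,
      (map_mul'_comp_assoc_comp_map_AHcomul k H).symm⟩

/-- Example 3.13 and Lemma 3.15: if `|G:H|` is invertible in `k`, the
coset algebra `A_H = k(G/H)` — with trivial `G`-grading, twisted action `c·δ_{gH} = δ_{cgH}`,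
pointwise multiplication `δ_{gH}δ_{kH} = δ_{gH}` if `gH=kH` (else `0`), unit `∑ δ_{gᵢH}`,
comultiplication `Δ(δ_{gH}) = δ_{gH}⊗δ_{gH}` and counit `ε(δ_{gH}) = 1` — is a rigid
Frobenius algebra in `Z(Vect_G^ω)`: a connected commutative Frobenius algebra with
`m∘Δ = id`, `ε(1) = |G:H|` and quantum dimension `|G:H| ≠ 0`. -/
theorem cosetAlgebra_rigidFrobenius {k : Type*} [Field k] [IsAlgClosed k] {G : Type*}
    [Group G] [Finite G] [DecidableEq G] (ω : G → G → G → kˣ)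
    (hω : IsCocycle ω) (hnorm : IsNormalized ω) (H : Subgroup G)
    [Fintype (G ⧸ H)] [DecidableEq (G ⧸ H)]
    (hind : (H.index : k) ≠ 0) :
    ∃ SA : YDOn k ω ((G ⧸ H) → k),
      -- the Yetter–Drinfeld structure of A_H: trivial grading and action c·δ_{gH} = δ_{cgH}
      SA.grading 1 = ⊤ ∧ (∀ d : G, d ≠ 1 → SA.grading d = ⊥) ∧
      (∀ c : G, SA.act c = cosetAct k H c) ∧
      -- the multiplication and unit are morphisms in Z(Vect_G^ω)
      (∀ T : YDOn k ω (((G ⧸ H) → k) ⊗[k] ((G ⧸ H) → k)),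
          IsTensorStruct SA SA T → IsYDHom T SA (LinearMap.mul' k ((G ⧸ H) → k))) ∧
      ((1 : (G ⧸ H) → k) ∈ SA.grading 1) ∧
      (∀ g : G, SA.act g (1 : (G ⧸ H) → k) = 1) ∧
      -- associativity and unitality in the category
      (∀ a, IsAssocMap SA SA SA a →
          LinearMap.mul' k ((G ⧸ H) → k)
              ∘ₗ TensorProduct.map (LinearMap.mul' k ((G ⧸ H) → k)) LinearMap.id
            = LinearMap.mul' k ((G ⧸ H) → k)
              ∘ₗ TensorProduct.map LinearMap.id (LinearMap.mul' k ((G ⧸ H) → k)) ∘ₗ a) ∧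
      (∀ x : (G ⧸ H) → k,
          LinearMap.mul' k ((G ⧸ H) → k) (1 ⊗ₜ[k] x) = x ∧
          LinearMap.mul' k ((G ⧸ H) → k) (x ⊗ₜ[k] 1) = x) ∧
      -- commutativity
      (∀ c, IsBraidingMap SA SA c →
          LinearMap.mul' k ((G ⧸ H) → k) ∘ₗ c = LinearMap.mul' k ((G ⧸ H) → k)) ∧
      -- connectedness: Hom(1, A_H) is one-dimensional
      Module.finrank k
        ↥(SA.grading 1 ⊓ ⨅ g : G,
            LinearMap.eqLocus (SA.act g) (LinearMap.id : ((G ⧸ H) → k) →ₗ[k] _)) = 1 ∧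
      -- Δ and ε are morphisms in Z(Vect_G^ω)
      (∀ T : YDOn k ω (((G ⧸ H) → k) ⊗[k] ((G ⧸ H) → k)),
          IsTensorStruct SA SA T → IsYDHom SA T (AHcomul k H)) ∧
      (∀ g : G, AHcounit k H ∘ₗ SA.act g = AHcounit k H) ∧
      (∀ d : G, d ≠ 1 → ∀ v ∈ SA.grading d, AHcounit k H v = 0) ∧
      -- coassociativity and counitality
      (∀ a, IsAssocMap SA SA SA a →
          a ∘ₗ TensorProduct.map (AHcomul k H) LinearMap.id ∘ₗ AHcomul k H
            = TensorProduct.map LinearMap.id (AHcomul k H) ∘ₗ AHcomul k H) ∧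
      ((TensorProduct.lid k ((G ⧸ H) → k)).toLinearMap
          ∘ₗ TensorProduct.map (AHcounit k H) LinearMap.id ∘ₗ AHcomul k H = LinearMap.id) ∧
      ((TensorProduct.rid k ((G ⧸ H) → k)).toLinearMap
          ∘ₗ TensorProduct.map LinearMap.id (AHcounit k H) ∘ₗ AHcomul k H = LinearMap.id) ∧
      -- the Frobenius compatibility conditions
      (∀ a a', IsAssocMap SA SA SA a → IsAssocInvMap SA SA SA a' →
          TensorProduct.map (LinearMap.mul' k ((G ⧸ H) → k)) LinearMap.id ∘ₗ a'
              ∘ₗ TensorProduct.map LinearMap.id (AHcomul k H)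
            = AHcomul k H ∘ₗ LinearMap.mul' k ((G ⧸ H) → k) ∧
          AHcomul k H ∘ₗ LinearMap.mul' k ((G ⧸ H) → k)
            = TensorProduct.map LinearMap.id (LinearMap.mul' k ((G ⧸ H) → k)) ∘ₗ a
              ∘ₗ TensorProduct.map (AHcomul k H) LinearMap.id) ∧
      -- specialness: m∘Δ = id and ε(1) = |G:H|
      (LinearMap.mul' k ((G ⧸ H) → k) ∘ₗ AHcomul k H = LinearMap.id) ∧
      (AHcounit k H (1 : (G ⧸ H) → k) = (H.index : k)) ∧
      -- quantum dimension dim_j(A_H) = |G:H| ≠ 0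
      (AHcounit k H (LinearMap.mul' k ((G ⧸ H) → k) (AHcomul k H (1 : (G ⧸ H) → k)))
          = (H.index : k)) ∧
      (H.index : k) ≠ 0 :=
  cosetAlgebra_rigidFrobenius_general ω hnorm H hind
end
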